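/- With u₀(t) as the largest solution of t = (log u)/(2√(2u)) − ρ/√(2u) + 1/(4u) for fixed ρ ∈ ℝ, one has −t·u₀(t) + √(2u₀(t)) = −(log(1/t))²/(2t) − log(1/t)·log log(1/t)/t + (1 + ρ + (1/2)log 2)·log(1/t)/t + o(log(1/t)/t) as t → 0⁺. -/

import Mathlib

/-!
Since the right-hand side of the saddle point equation is continuous, positive for large `u` and
tends to `0`, the intermediate value theorem gives solutions `u ≥ M` for all small `t`, so
`u₀(t) → ∞`. Put `s = √(2u₀)`, `σ = t s`, `L = log(1/t)` and `c = ρ + (log 2)/2`. The saddle point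
equation becomes `σ = log s - c + 1/(2s) = L + log σ - c + o(1)`, hence `σ ~ L`, and then
`σ = L + log L - c + ε` with `ε → 0`. The exponent equals `(σ - σ²/2)/t`, and substituting
`σ` leaves the error `(-Lε + O((log L)²))/t = o(L/t)`.
-/

open Filter Real Asymptotics Topology

theorem tendsto_atTop_of_isGreatest_preimage {f u₀ : ℝ → ℝ} (hf : ContinuousOn f (Set.Ioi 0))
    (hlim : Tendsto f atTop (𝓝 0)) (hpos : ∀ᶠ u in atTop, 0 < f u)
    (h : ∀ᶠ t in 𝓝[>] 0, IsGreatest {u : ℝ | 0 < u ∧ t = f u} (u₀ t)) :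
    Tendsto u₀ (𝓝[>] 0) atTop := by
  refine tendsto_atTop.2 fun M => ?_
  obtain ⟨M', hfM', hM'⟩ := (hpos.and (eventually_ge_atTop (max M 1))).exists
  have hM'pos : 0 < M' := by linarith [le_max_right M 1]
  filter_upwards [h, Ioo_mem_nhdsGT hfM'] with t ht ⟨ht0, htM'⟩
  obtain ⟨u', hu'M', hu't⟩ :=
    ((hlim.eventually_lt_const ht0).and (eventually_ge_atTop M')).exists.imp fun _ h => h.symm
  obtain ⟨u, hu, hut⟩ := intermediate_value_Icc' hu'M'
    (hf.mono fun x hx => hM'pos.trans_le hx.1) ⟨hu't.le, htM'.le⟩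
  calc M ≤ M' := (le_max_left M 1).trans hM'
    _ ≤ u := hu.1
    _ ≤ u₀ t := ht.2 ⟨hM'pos.trans_le hu.1, hut.symm⟩

noncomputable def saddleFun (ρ u : ℝ) : ℝ :=
  log u / (2 * √(2 * u)) - ρ / √(2 * u) + 1 / (4 * u)

theorem saddleFun_eq_of_pos (ρ : ℝ) {u : ℝ} (hu : 0 < u) :
    saddleFun ρ u = (log √(2 * u) - (ρ + log 2 / 2)) / √(2 * u) + 1 / (2 * √(2 * u) ^ 2) := by
  have hs : 0 < √(2 * u) := by positivity
  rw [sq_sqrt (by positivity), log_sqrt (by positivity), log_mul two_ne_zero hu.ne', saddleFun]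
  field_simp
  ring

theorem continuousOn_saddleFun (ρ : ℝ) : ContinuousOn (saddleFun ρ) (Set.Ioi 0) := by
  unfold saddleFun
  fun_prop (disch := intro x hx; simp_all [Set.mem_Ioi]; positivity)

theorem tendsto_sqrt_two_mul_atTop : Tendsto (fun u : ℝ => √(2 * u)) atTop atTop :=
  tendsto_sqrt_atTop.comp (tendsto_id.const_mul_atTop two_pos)

theorem tendsto_saddleFun_atTop (ρ : ℝ) : Tendsto (saddleFun ρ) atTop (𝓝 0) := by
  have hg : Tendsto (fun s => (log s - (ρ + log 2 / 2)) / s + 1 / (2 * s ^ 2)) atTop (𝓝 0) := by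
    have := (isLittleO_log_id_atTop.tendsto_div_nhds_zero.sub
      ((tendsto_const_nhds (x := ρ + log 2 / 2)).div_atTop tendsto_id)).add
        ((tendsto_const_nhds (x := (1 : ℝ))).div_atTop
        ((tendsto_pow_atTop two_ne_zero).const_mul_atTop two_pos))
    simpa [sub_div] using this
  exact (hg.comp tendsto_sqrt_two_mul_atTop).congr'
    ((eventually_gt_atTop 0).mono fun u hu => (saddleFun_eq_of_pos ρ hu).symm)

theorem eventually_saddleFun_pos (ρ : ℝ) : ∀ᶠ u in atTop, 0 < saddleFun ρ u := by
  filter_upwards [eventually_gt_atTop 0,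
    (tendsto_log_atTop.comp tendsto_sqrt_two_mul_atTop).eventually_gt_atTop (ρ + log 2 / 2)]
    with u hu hlog
  have hs : 0 < √(2 * u) := by positivity
  rw [saddleFun_eq_of_pos ρ hu]
  exact add_pos_of_nonneg_of_pos (div_nonneg (sub_nonneg.2 hlog.le) hs.le) (by positivity)

theorem mul_sqrt_eq_of_eq_saddleFun {ρ t u : ℝ} (hu : 0 < u) (ht : t = saddleFun ρ u) :
    t * √(2 * u) = log √(2 * u) - (ρ + log 2 / 2) + 1 / (2 * √(2 * u)) := by
  have hs : 0 < √(2 * u) := by positivity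
  rw [ht, saddleFun_eq_of_pos ρ hu]
  field_simp

theorem neg_mul_add_sqrt_eq {t u : ℝ} (ht : t ≠ 0) (hu : 0 ≤ u) :
    -t * u + √(2 * u) = (t * √(2 * u) - (t * √(2 * u)) ^ 2 / 2) / t := by
  rw [mul_pow, sq_sqrt (by positivity)]
  field_simp
  ring

section Asymptotics

variable {α : Type*} {l : Filter α} {L σ δ : α → ℝ} {c : ℝ}

theorem tendsto_sub_add_log_of_eq_add_log (hL : Tendsto L l atTop) (hσ : Tendsto σ l atTop)
    (hδ : Tendsto δ l (𝓝 0)) (heq : ∀ᶠ x in l, σ x = L x + log (σ x) - c + δ x) :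
    Tendsto (fun x => σ x - (L x + log (L x) - c)) l (𝓝 0) := by
  have hlog : (fun x => log (σ x)) =o[l] σ := isLittleO_log_id_atTop.comp_tendsto hσ
  have hbdd : (fun x => δ x - c) =o[l] σ :=
    ((hδ.sub_const c).isBigO_one ℝ).trans_isLittleO
      ((isLittleO_one_left_iff ℝ).2 (tendsto_norm_atTop_atTop.comp hσ))
  have hequiv : L ~[l] σ := by
    refine IsLittleO.isEquivalent ((hlog.add hbdd).neg_left.congr' ?_ EventuallyEq.rfl)
    filter_upwards [heq] with x hx
    simp only [Pi.sub_apply]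
    linarith
  have hratio : Tendsto (fun x => σ x / L x) l (𝓝 1) :=
    (isEquivalent_iff_tendsto_one (hL.eventually_ne_atTop 0)).1 hequiv.symm
  have hlog_ratio : Tendsto (fun x => log (σ x / L x)) l (𝓝 0) := by
    simpa [Function.comp_def] using (continuousAt_log one_ne_zero).tendsto.comp hratio
  refine (add_zero (0 : ℝ) ▸ hlog_ratio.add hδ).congr' ?_
  filter_upwards [heq, hσ.eventually_gt_atTop 0, hL.eventually_gt_atTop 0] with x hx hσx hLx
  rw [log_div hσx.ne' hLx.ne']
  linarith

theorem isLittleO_sub_sq_div_two_sub (hL : Tendsto L l atTop)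
    (hε : Tendsto (fun x => σ x - (L x + log (L x) - c)) l (𝓝 0)) :
    (fun x => σ x - σ x ^ 2 / 2 - (-L x ^ 2 / 2 - L x * log (L x) + (1 + c) * L x)) =o[l] L := by
  have hlogL : Tendsto (fun x => log (L x)) l atTop := tendsto_log_atTop.comp hL
  have hb : (fun x => σ x - L x) =O[l] (fun x => log (L x)) := by
    have hrest : (fun x => σ x - (L x + log (L x) - c) - c) =O[l] (fun x => log (L x)) :=
      ((hε.sub_const c).isBigO_one ℝ).trans
        ((isLittleO_one_left_iff ℝ).2 (tendsto_norm_atTop_atTop.comp hlogL)).isBigO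
    exact ((isBigO_refl _ l).add hrest).congr_left fun x => by ring
  have hLε : (fun x => L x * (σ x - (L x + log (L x) - c))) =o[l] L := by
    simpa using (isBigO_refl L l).mul_isLittleO ((isLittleO_one_iff ℝ).2 hε)
  have hb2 : (fun x => (σ x - L x) ^ 2) =o[l] L :=
    (hb.pow 2).trans_isLittleO (isLittleO_pow_log_id_atTop.comp_tendsto hL)
  have hb1 : (fun x => σ x - L x) =o[l] L :=
    hb.trans_isLittleO (isLittleO_log_id_atTop.comp_tendsto hL)
  exact ((hLε.neg_left.sub (hb2.const_mul_left (1 / 2))).add hb1).congr_left fun x => by ring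

end Asymptotics

/-- Expansion of the exponent `−t u₀(t) + √(2 u₀(t))` at the saddle point. -/
theorem exponent_expansion (ρ : ℝ) (u₀ : ℝ → ℝ)
    (h : ∀ᶠ t in nhdsWithin (0:ℝ) (Set.Ioi 0),
      IsGreatest {u : ℝ | 0 < u ∧
        t = Real.log u / (2 * Real.sqrt (2 * u)) - ρ / Real.sqrt (2 * u) + 1 / (4 * u)}
        (u₀ t)) :
    ∃ e : ℝ → ℝ,
      e =o[nhdsWithin (0:ℝ) (Set.Ioi 0)] (fun t => Real.log (1 / t) / t) ∧
      ∀ᶠ t in nhdsWithin (0:ℝ) (Set.Ioi 0),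
        -t * u₀ t + Real.sqrt (2 * u₀ t) =
          -Real.log (1 / t) ^ 2 / (2 * t)
            - Real.log (1 / t) * Real.log (Real.log (1 / t)) / t
            + (1 + ρ + (1 / 2) * Real.log 2) * Real.log (1 / t) / t + e t := by
  set c := ρ + log 2 / 2
  set L := fun t : ℝ => log (1 / t)
  set s := fun t => √(2 * u₀ t)
  have hu₀ : Tendsto u₀ (𝓝[>] 0) atTop := tendsto_atTop_of_isGreatest_preimage
    (continuousOn_saddleFun ρ) (tendsto_saddleFun_atTop ρ) (eventually_saddleFun_pos ρ) h
  have hs : Tendsto s (𝓝[>] 0) atTop := tendsto_sqrt_two_mul_atTop.comp hu₀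
  have hδ : Tendsto (fun t => 1 / (2 * s t)) (𝓝[>] 0) (𝓝 0) :=
    tendsto_const_nhds.div_atTop (hs.const_mul_atTop two_pos)
  have hL : Tendsto L (𝓝[>] 0) atTop :=
    tendsto_log_atTop.comp (by simpa only [one_div] using tendsto_inv_nhdsGT_zero (𝕜 := ℝ) :
      Tendsto (fun t : ℝ => 1 / t) _ _)
  have hsaddle : ∀ᶠ t in 𝓝[>] 0, t * s t = log (s t) - c + 1 / (2 * s t) :=
    h.mono fun t ht => mul_sqrt_eq_of_eq_saddleFun ht.1.1 ht.1.2
  have hσ : Tendsto (fun t => t * s t) (𝓝[>] 0) atTop :=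
    ((tendsto_log_atTop.comp hs).atTop_add ((tendsto_const_nhds (x := -c)).add hδ)).congr'
      (hsaddle.mono fun t ht => by simp only [Function.comp_apply, ht]; ring)
  have heq : ∀ᶠ t in 𝓝[>] 0, t * s t = L t + log (t * s t) - c + 1 / (2 * s t) := by
    filter_upwards [hsaddle, self_mem_nhdsWithin, hs.eventually_gt_atTop 0] with t ht ht0 hst
    rw [log_mul ht0.ne' hst.ne', ht]
    simp only [L, one_div, log_inv]
    ring
  have hE := isLittleO_sub_sq_div_two_sub hL (tendsto_sub_add_log_of_eq_add_log hL hσ hδ heq)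
  refine ⟨fun t =>
    (t * s t - (t * s t) ^ 2 / 2 - (-L t ^ 2 / 2 - L t * log (L t) + (1 + c) * L t)) / t, ?_, ?_⟩
  · simpa only [div_eq_mul_inv, L] using hE.mul_isBigO (isBigO_refl (fun t : ℝ => t⁻¹) _)
  · filter_upwards [self_mem_nhdsWithin, hu₀.eventually_ge_atTop 0] with t (ht : 0 < t) hu
    rw [neg_mul_add_sqrt_eq ht.ne' hu]
    field_simp
    ring
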